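/- (Existence of the sign-pattern witness K_{I,v}.) Let K ⊆ ℝ^m be a nonempty closed convex polyhedron, I ⊆ {1,…,N}, v ∈ ℤ^m. There exists a closed convex set K_{I,v} ⊆ ℝ^m such that for every sign vector s ∈ {+,−,0}^m: s ∈ 𝕊_{K,I,v} if and only if K_{I,v} ∩ 𝔹_s ≠ ∅; and furthermore K_{I,v} ∩ 𝔹_s ≠ ∅ implies K_{I,v} ∩ Int(𝔹_s) ≠ ∅. -/

import Mathlib

open Pointwise
open scoped Classical

noncomputable section

/-- The box `𝔹 = ∏ᵢ [−η_i/2, η_i/2]`. -/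
def boxB {m : ℕ} (η : Fin m → ℝ) : Set (Fin m → ℝ) :=
  {x | ∀ i, -(η i) / 2 ≤ x i ∧ x i ≤ η i / 2}

/-- The coordinate cone `σ_s` associated to a sign vector `s`. -/
def sigmaCone {m : ℕ} (s : Fin m → SignType) : Set (Fin m → ℝ) :=
  {x | ∀ i, (s i = 1 → 0 ≤ x i) ∧ (s i = -1 → x i ≤ 0) ∧ (s i = 0 → x i = 0)}

/-- The shift `δ_s`, whose `i`-th coordinate is `η_i`, `−η_i`, `0` according as
`s_i = +, −, 0`. -/
def deltaS {m : ℕ} (η : Fin m → ℝ) (s : Fin m → SignType) : Fin m → ℝ :=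
  fun i => (s i : ℝ) * η i

/-- The thick cone `𝔹_s = 𝔹 + σ_s + δ_s`. -/
def thickCone {m : ℕ} (η : Fin m → ℝ) (s : Fin m → SignType) :
    Set (Fin m → ℝ) :=
  {x | ∃ bb ∈ boxB η, ∃ c ∈ sigmaCone s, x = bb + c + deltaS η s}

/-- The cone `τ_I` generated by `{e_j : j ∈ I}`. -/
def tauCone {N : ℕ} (I : Finset (Fin N)) : Set (Fin N → ℝ) :=
  {x | ∀ j, 0 ≤ x j ∧ (j ∉ I → x j = 0)}

/-- `K(I) = K + π(e_I) + π(τ_I)`. -/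
def KofI {N m : ℕ} (π : (Fin N → ℝ) →ₗ[ℝ] (Fin m → ℝ)) (K : Set (Fin m → ℝ))
    (I : Finset (Fin N)) : Set (Fin m → ℝ) :=
  {y | ∃ kk ∈ K, ∃ t ∈ tauCone I,
    y = kk + π (fun j => if j ∈ I then (1 : ℝ) else 0) + π t}

/-- `I ∈ ℐ(K, v)`, i.e. `K(I) ∩ (v + 𝔹) ≠ ∅`. -/
def memIdx {N m : ℕ} (π : (Fin N → ℝ) →ₗ[ℝ] (Fin m → ℝ)) (η : Fin m → ℝ)
    (K : Set (Fin m → ℝ)) (v : Fin m → ℤ) (I : Finset (Fin N)) : Prop :=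
  (KofI π K I ∩ {x | ∃ bb ∈ boxB η, x = (fun i => (v i : ℝ)) + bb}).Nonempty

/-- The sign pattern `𝕊_{K,I,v}`: sign vectors `s` with `K(I) ∩ (v + 𝔹_s) ≠ ∅`
such that `s_i ≠ −` whenever `I ∩ B_i^+ ≠ ∅` and `s_i ≠ +` whenever
`I ∩ B_i^- ≠ ∅`. -/
def signPattern {N m : ℕ} (blk : Fin N → Fin m) (b : Fin N → ℤ)
    (π : (Fin N → ℝ) →ₗ[ℝ] (Fin m → ℝ)) (η : Fin m → ℝ)
    (K : Set (Fin m → ℝ)) (I : Finset (Fin N)) (v : Fin m → ℤ) :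
    Set (Fin m → SignType) :=
  {s | (KofI π K I ∩
          {x | ∃ bb ∈ thickCone η s, x = (fun i => (v i : ℝ)) + bb}).Nonempty ∧
    ∀ i, ((∃ j ∈ I, blk j = i ∧ 0 < b j) → s i ≠ -1) ∧
         ((∃ j ∈ I, blk j = i ∧ b j < 0) → s i ≠ 1)}

/-!
Let `Q` be the set of `z` with `v + z ∈ K(I)` and with `zᵢ ≥ 0` whenever `I` meets `B_i^+`,
`zᵢ ≤ 0` whenever `I` meets `B_i^-`. Since `K(I) + π(τ_I) = K(I)`, and `π(τ_I)` contains every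
coordinate move in a direction allowed by `I`, clamping each coordinate towards `0` shows that
`s ∈ 𝕊_{K,I,v}` exactly when `Q` meets `𝔹_s`. Being a linear image of a polyhedron, `Q − 𝔹_s`
is closed (finitely generated cones are closed), so a small closed thickening of `Q` meets exactly
the same thick cones as `Q`. As `𝔹_s` is convex with nonempty interior, this thickening meets
`Int 𝔹_s` as soon as `Q` meets `𝔹_s`; it is the required `K_{I,v}`.
-/

open Set Metric

section Cone

variable {κ F : Type*}

def nonnegSupported (S : Finset κ) : Set (κ → ℝ) := {c | 0 ≤ c ∧ ∀ k ∉ S, c k = 0}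

variable [AddCommGroup F] [Module ℝ F]

theorem image_nonnegSupported_eq_biUnion_erase (T : (κ → ℝ) →ₗ[ℝ] F) {S : Finset κ}
    {μ : κ → ℝ} (hTμ : T μ = 0) (hμS : ∀ k ∉ S, μ k = 0) {k₀ : κ} (hk₀ : 0 < μ k₀) :
    T '' nonnegSupported S = ⋃ k ∈ S.filter (0 < μ ·), T '' nonnegSupported (S.erase k) := by
  have hmemS : ∀ k, 0 < μ k → k ∈ S := fun k hk => by_contra fun h => hk.ne' (hμS k h)
  apply subset_antisymm
  · rintro _ ⟨c, ⟨hc0, hcS⟩, rfl⟩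
    -- subtract the largest multiple of `μ` that keeps `c` nonnegative; it kills a coordinate
    obtain ⟨k, hk, hmin⟩ := (S.filter (0 < μ ·)).exists_min_image (fun j => c j / μ j)
      ⟨k₀, Finset.mem_filter.2 ⟨hmemS k₀ hk₀, hk₀⟩⟩
    have hμk := (Finset.mem_filter.1 hk).2
    set t := c k / μ k
    have ht : 0 ≤ t := div_nonneg (hc0 k) hμk.le
    refine mem_biUnion hk ⟨c - t • μ, ⟨fun j => ?_, fun j hj => ?_⟩, by simp [hTμ]⟩
    · have hcj : 0 ≤ c j := hc0 j
      simp only [Pi.zero_apply, Pi.sub_apply, Pi.smul_apply, smul_eq_mul, sub_nonneg]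
      rcases le_or_gt (μ j) 0 with hj | hj
      · nlinarith
      · exact (le_div_iff₀ hj).1 (hmin j (Finset.mem_filter.2 ⟨hmemS j hj, hj⟩))
    · simp only [Pi.sub_apply, Pi.smul_apply, smul_eq_mul]
      rcases eq_or_ne j k with rfl | hjk
      · simp [t, hμk.ne']
      · have hjS : j ∉ S := fun h => hj (Finset.mem_erase.2 ⟨hjk, h⟩)
        simp [hcS j hjS, hμS j hjS]
  · exact iUnion₂_subset fun k _ => image_mono fun c ⟨hc0, hcS⟩ =>
      ⟨hc0, fun j hj => hcS j fun h => hj (S.erase_subset k h)⟩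

variable [Fintype κ] [TopologicalSpace F] [IsTopologicalAddGroup F] [ContinuousSMul ℝ F]
  [T2Space F]

theorem isClosed_image_nonnegSupported (T : (κ → ℝ) →ₗ[ℝ] F) (S : Finset κ) :
    IsClosed (T '' nonnegSupported S) := by
  induction S using Finset.strongInduction with
  | _ S ih =>
  let V : Submodule ℝ (κ → ℝ) := Submodule.pi (↑S)ᶜ fun _ => ⊥
  have hV : ∀ c, c ∈ V ↔ ∀ k ∉ S, c k = 0 := by simp [V, Submodule.mem_pi]
  by_cases hinj : ∀ μ ∈ V, T μ = 0 → μ = 0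
  · have hker : LinearMap.ker (T.domRestrict V) = ⊥ :=
      LinearMap.ker_eq_bot'.2 fun μ hμ => Subtype.ext (hinj μ μ.2 hμ)
    have himage : T '' nonnegSupported S = T.domRestrict V '' {c | 0 ≤ (c : κ → ℝ)} := by
      ext x
      constructor
      · rintro ⟨c, ⟨hc0, hcS⟩, rfl⟩
        exact ⟨⟨c, (hV c).2 hcS⟩, hc0, rfl⟩
      · rintro ⟨c, hc0, rfl⟩
        exact ⟨c, ⟨hc0, (hV c).1 c.2⟩, rfl⟩
    rw [himage]
    exact (LinearMap.isClosedEmbedding_of_injective hker).isClosedMap _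
      (isClosed_Ici.preimage continuous_subtype_val)
  · push Not at hinj
    obtain ⟨μ, hμV, hTμ, k₀, hk₀⟩ : ∃ μ ∈ V, T μ = 0 ∧ ∃ k, 0 < μ k := by
      obtain ⟨μ, hμV, hTμ, hμ0⟩ := hinj
      obtain ⟨k, hk⟩ := Function.ne_iff.mp hμ0
      rcases hk.lt_or_gt with h | h
      · exact ⟨-μ, V.neg_mem hμV, by simp [hTμ], k, by simpa using h⟩
      · exact ⟨μ, hμV, hTμ, k, h⟩
    rw [image_nonnegSupported_eq_biUnion_erase T hTμ ((hV μ).1 hμV) hk₀]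
    exact isClosed_biUnion_finset fun k hk =>
      ih _ (Finset.erase_ssubset (Finset.mem_filter.1 hk).1)

theorem LinearMap.isClosed_image_nonneg (T : (κ → ℝ) →ₗ[ℝ] F) : IsClosed (T '' Ici 0) := by
  have h : nonnegSupported (Finset.univ : Finset κ) = Ici 0 := by
    ext; simp [nonnegSupported]
  simpa only [h] using isClosed_image_nonnegSupported T Finset.univ

end Cone

theorem LinearMap.isClosed_image_univ_prod_nonneg {ι E F : Type*} [Fintype ι]
    [AddCommGroup E] [Module ℝ E]
    [NormedAddCommGroup F] [NormedSpace ℝ F] [FiniteDimensional ℝ F]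
    (Φ : E × (ι → ℝ) →ₗ[ℝ] F) : IsClosed (Φ '' (univ ×ˢ Ici 0)) := by
  obtain ⟨W, hW⟩ := (LinearMap.range (Φ ∘ₗ LinearMap.inl ℝ E (ι → ℝ))).exists_isCompl
  set q := W.projection _ hW.symm
  have hq : ∀ x, q x = 0 ↔ ∃ y, Φ (y, 0) = x := fun x => by
    rw [← LinearMap.mem_ker, Submodule.ker_projection]; rfl
  have hsplit : ∀ y u, Φ (y, u) = Φ (y, 0) + Φ (0, u) := fun y u => by
    rw [← map_add, Prod.mk_add_mk, add_zero, zero_add]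
  -- the free variables are quotiented out by `q`, whose kernel is their image
  have : Φ '' (univ ×ˢ Ici 0) = q ⁻¹' ((q ∘ₗ Φ ∘ₗ LinearMap.inr ℝ E (ι → ℝ)) '' Ici 0) := by
    ext x
    simp only [mem_preimage, mem_image, LinearMap.coe_comp, Function.comp_apply,
      LinearMap.inr_apply]
    constructor
    · rintro ⟨⟨y, u⟩, ⟨-, hu⟩, rfl⟩
      exact ⟨u, hu, by rw [hsplit y u, map_add, (hq _).2 ⟨y, rfl⟩, zero_add]⟩
    · rintro ⟨u, hu, hqu⟩
      obtain ⟨y, hy⟩ := (hq (x - Φ (0, u))).1 (by rw [map_sub, hqu, sub_self])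
      exact ⟨(y, u), ⟨mem_univ _, hu⟩, by rw [hsplit, hy, sub_add_cancel]⟩
  rw [this]
  exact (LinearMap.isClosed_image_nonneg _).preimage q.continuous_of_finiteDimensional

def IsPolyhedral {E : Type*} [AddCommGroup E] [Module ℝ E] (P : Set E) : Prop :=
  ∃ S : Finset (Module.Dual ℝ E × ℝ), P = {x | ∀ p ∈ S, p.1 x ≤ p.2}

namespace IsPolyhedral

variable {E F : Type*} [AddCommGroup E] [Module ℝ E] [AddCommGroup F] [Module ℝ F]
  {P Q : Set E} {Q' : Set F}

theorem setOf_le (f : Module.Dual ℝ E) (c : ℝ) : IsPolyhedral {x | f x ≤ c} :=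
  ⟨{(f, c)}, by simp⟩

protected theorem univ : IsPolyhedral (univ : Set E) := ⟨∅, by simp⟩

protected theorem inter (hP : IsPolyhedral P) (hQ : IsPolyhedral Q) : IsPolyhedral (P ∩ Q) := by
  obtain ⟨S, rfl⟩ := hP
  obtain ⟨T, rfl⟩ := hQ
  refine ⟨S ∪ T, ?_⟩
  ext x
  simp [or_imp, forall_and]

protected theorem iInter {ι : Type*} [Fintype ι] {P : ι → Set E} (h : ∀ i, IsPolyhedral (P i)) :
    IsPolyhedral (⋂ i, P i) := by
  choose S hS using h
  refine ⟨Finset.univ.biUnion S, ?_⟩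
  ext x
  simp only [hS, mem_iInter, mem_ofPred_eq, Finset.mem_biUnion, Finset.mem_univ, true_and,
    forall_exists_index]
  exact ⟨fun h p i hp => h i p hp, fun h i p hp => h p i hp⟩

theorem preimage_affine (hP : IsPolyhedral P) (A : F →ₗ[ℝ] E) (a : E) :
    IsPolyhedral {x | A x + a ∈ P} := by
  obtain ⟨S, rfl⟩ := hP
  refine ⟨S.image fun p => (p.1 ∘ₗ A, p.2 - p.1 a), ?_⟩
  ext x
  simp only [mem_ofPred_eq, Finset.forall_mem_image, LinearMap.coe_comp, Function.comp_apply,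
    map_add, le_sub_iff_add_le]

theorem preimage (hP : IsPolyhedral P) (A : F →ₗ[ℝ] E) : IsPolyhedral (A ⁻¹' P) := by
  have h := hP.preimage_affine A 0
  simp only [add_zero] at h
  exact h

theorem setOf_forall_mem {ι : Type*} [Fintype ι] {J : ι → Set ℝ} (h : ∀ i, IsPolyhedral (J i)) :
    IsPolyhedral {x : ι → ℝ | ∀ i, x i ∈ J i} := by
  rw [Set.ofPred_forall]
  exact .iInter fun i => (h i).preimage (LinearMap.proj (R := ℝ) (φ := fun _ : ι => ℝ) i)

theorem setOf_imp (hP : IsPolyhedral P) (p : Prop) : IsPolyhedral {x | p → x ∈ P} := by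
  by_cases hp : p
  · simpa [hp] using hP
  · simpa [hp] using IsPolyhedral.univ

theorem prod (hP : IsPolyhedral P) (hQ : IsPolyhedral Q') : IsPolyhedral (P ×ˢ Q') := by
  rw [Set.prod_eq]
  exact (hP.preimage (LinearMap.fst ℝ E F)).inter (hQ.preimage (LinearMap.snd ℝ E F))

protected theorem convex (hP : IsPolyhedral P) : Convex ℝ P := by
  obtain ⟨S, rfl⟩ := hP
  simp only [Set.ofPred_forall]
  exact convex_iInter₂ fun p _ => convex_halfSpace_le p.1.isLinear p.2

end IsPolyhedral

theorem isPolyhedral_Ici (a : ℝ) : IsPolyhedral (Ici a) := by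
  show IsPolyhedral {x | a ≤ x}
  simpa [neg_le_neg_iff] using IsPolyhedral.setOf_le (-LinearMap.id) (-a)

theorem isPolyhedral_Iic (a : ℝ) : IsPolyhedral (Iic a) :=
  IsPolyhedral.setOf_le LinearMap.id a

theorem isPolyhedral_Icc (a b : ℝ) : IsPolyhedral (Icc a b) := by
  rw [← Ici_inter_Iic]
  exact (isPolyhedral_Ici a).inter (isPolyhedral_Iic b)

theorem isPolyhedral_singleton (a : ℝ) : IsPolyhedral ({a} : Set ℝ) := by
  rw [← Icc_self]
  exact isPolyhedral_Icc a a

namespace IsPolyhedral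

variable {E F : Type*} [AddCommGroup E] [Module ℝ E]
  [NormedAddCommGroup F] [NormedSpace ℝ F] [FiniteDimensional ℝ F] {P : Set E}

theorem isClosed_image (hP : IsPolyhedral P) (L : E →ₗ[ℝ] F) : IsClosed (L '' P) := by
  obtain ⟨S, rfl⟩ := hP
  let Φ : E × (S → ℝ) →ₗ[ℝ] F × (S → ℝ) :=
    (L ∘ₗ LinearMap.fst ℝ E _).prod
      (LinearMap.pi (fun p : S => p.1.1 ∘ₗ LinearMap.fst ℝ E _) + LinearMap.snd ℝ E _)
  -- `x ∈ L '' P` iff `(x, d)` is attained with nonnegative slack in every inequality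
  have : L '' {x | ∀ p ∈ S, p.1 x ≤ p.2} =
      (fun x => (x, fun p : S => p.1.2)) ⁻¹' (Φ '' (univ ×ˢ Ici 0)) := by
    ext x
    constructor
    · rintro ⟨y, hy, rfl⟩
      refine ⟨(y, fun p => p.1.2 - p.1.1 y), ⟨mem_univ _, fun p => ?_⟩, ?_⟩
      · simpa using hy p.1 p.2
      · ext p <;> simp [Φ]
    · rintro ⟨⟨y, u⟩, ⟨-, hu⟩, hΦ⟩
      simp only [Prod.ext_iff, funext_iff] at hΦ
      refine ⟨y, fun p hp => ?_, by simpa [Φ] using hΦ.1⟩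
      have h := hΦ.2 ⟨p, hp⟩
      have hu' : 0 ≤ u ⟨p, hp⟩ := hu ⟨p, hp⟩
      simp [Φ] at h
      linarith
  rw [this]
  exact (LinearMap.isClosed_image_univ_prod_nonneg Φ).preimage
    (continuous_id.prodMk continuous_const)

variable {E' : Type*} [AddCommGroup E'] [Module ℝ E'] {P' : Set E'}

theorem isClosed_image_sub_image (hP : IsPolyhedral P) (hP' : IsPolyhedral P')
    (f : E →ₗ[ℝ] F) (g : E' →ₗ[ℝ] F) : IsClosed (f '' P - g '' P') := by
  have : f '' P - g '' P' =
      (f ∘ₗ LinearMap.fst ℝ E E' - g ∘ₗ LinearMap.snd ℝ E E') '' (P ×ˢ P') := by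
    rw [← image2_sub, image2_image_left, image2_image_right, ← image_prod]
    rfl
  rw [this]
  exact (hP.prod hP').isClosed_image _

end IsPolyhedral

theorem Convex.cthickening_inter_interior_nonempty {E : Type*} [NormedAddCommGroup E]
    [NormedSpace ℝ E] {Q B : Set E} (hB : Convex ℝ B) (hint : (interior B).Nonempty)
    (hQB : (Q ∩ B).Nonempty) {ε : ℝ} (hε : 0 < ε) :
    (Metric.cthickening ε Q ∩ interior B).Nonempty := by
  obtain ⟨z, hzQ, hzB⟩ := hQB
  have hz : z ∈ closure (interior B) := by
    rw [hB.closure_interior_eq_closure_of_nonempty_interior hint]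
    exact subset_closure hzB
  obtain ⟨y, hy, hzy⟩ := Metric.mem_closure_iff.1 hz ε hε
  exact ⟨y, mem_cthickening_of_dist_le y z ε Q hzQ (by rw [dist_comm]; exact hzy.le), hy⟩

open Filter Topology in
theorem eventually_disjoint_cthickening {E : Type*} [SeminormedAddCommGroup E] {Q B : Set E}
    (hQB : IsClosed (Q - B)) :
    ∀ᶠ ε in 𝓝[>] (0 : ℝ), Disjoint Q B → Disjoint (cthickening ε Q) B := by
  by_cases hd : Disjoint Q B
  · have h0 : (0 : E) ∉ Q - B := by
      rintro ⟨q, hq, x, hx, hqx⟩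
      exact Set.disjoint_left.1 hd hq (by rwa [sub_eq_zero.1 hqx])
    obtain ⟨r, hr, hball⟩ := Metric.isOpen_iff.1 hQB.isOpen_compl 0 h0
    filter_upwards [Ioo_mem_nhdsGT hr] with ε hε _
    refine Set.disjoint_left.2 fun x hx hxB => ?_
    obtain ⟨q, hq, hxq⟩ := mem_thickening_iff.1 (cthickening_subset_thickening' hr hε.2 Q hx)
    exact hball (by rwa [mem_ball, dist_zero_right, ← dist_eq_norm, dist_comm])
      ⟨q, hq, x, hxB, rfl⟩
  · exact .of_forall fun _ h => (hd h).elim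

def signInterval (a : ℝ) : SignType → Set ℝ
  | .zero => Icc (-a / 2) (a / 2)
  | .neg => Iic (-a / 2)
  | .pos => Ici (a / 2)

theorem mem_signInterval_iff {a : ℝ} (ha : 0 ≤ a) (σ : SignType) (y : ℝ) :
    y ∈ signInterval a σ ↔ ∃ b c, (-a / 2 ≤ b ∧ b ≤ a / 2) ∧
      ((σ = 1 → 0 ≤ c) ∧ (σ = -1 → c ≤ 0) ∧ (σ = 0 → c = 0)) ∧ y = b + c + σ * a := by
  cases σ
  · simp only [signInterval, mem_Icc]
    refine ⟨fun h => ⟨y, 0, h, by simp, by simp⟩, ?_⟩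
    rintro ⟨b, c, hb, hc, rfl⟩
    simpa [hc.2.2 rfl] using hb
  · simp only [signInterval, mem_Iic]
    refine ⟨fun h => ⟨a / 2, y + a / 2, ⟨by linarith, le_rfl⟩, by simp; linarith, by simp; ring⟩,
      ?_⟩
    rintro ⟨b, c, hb, hc, rfl⟩
    simp; linarith [hc.2.1 rfl]
  · simp only [signInterval, mem_Ici]
    refine ⟨fun h => ⟨-a / 2, y - a / 2, ⟨le_rfl, by linarith⟩, by simp; linarith, by simp; ring⟩,
      ?_⟩
    rintro ⟨b, c, hb, hc, rfl⟩
    simp; linarith [hc.1 rfl]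

theorem thickCone_eq_pi {m : ℕ} {η : Fin m → ℝ} (hη : ∀ i, 0 ≤ η i) (s : Fin m → SignType) :
    thickCone η s = pi univ fun i => signInterval (η i) (s i) := by
  ext x
  simp only [mem_pi, mem_univ, true_implies, mem_signInterval_iff (hη _)]
  constructor
  · rintro ⟨bb, hbb, c, hc, rfl⟩ i
    exact ⟨bb i, c i, hbb i, hc i, rfl⟩
  · intro h
    choose bb c hbb hc hx using h
    exact ⟨bb, hbb, c, hc, funext hx⟩

theorem isPolyhedral_signInterval (a : ℝ) (σ : SignType) : IsPolyhedral (signInterval a σ) := by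
  cases σ
  exacts [isPolyhedral_Icc _ _, isPolyhedral_Iic _, isPolyhedral_Ici _]

theorem convex_signInterval (a : ℝ) (σ : SignType) : Convex ℝ (signInterval a σ) := by
  cases σ
  exacts [convex_Icc _ _, convex_Iic _, convex_Ici _]

theorem mul_mem_interior_signInterval {a : ℝ} (ha : 0 < a) (σ : SignType) :
    (σ : ℝ) * a ∈ interior (signInterval a σ) := by
  cases σ <;> simp [signInterval] <;> try constructor
  all_goals linarith

section ThickCone

variable {m : ℕ} {η : Fin m → ℝ}

theorem isPolyhedral_thickCone (hη : ∀ i, 0 ≤ η i) (s : Fin m → SignType) :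
    IsPolyhedral (thickCone η s) := by
  rw [thickCone_eq_pi hη]
  convert IsPolyhedral.setOf_forall_mem fun i => isPolyhedral_signInterval (η i) (s i)
  exact Set.ext fun x => mem_univ_pi

theorem convex_thickCone (hη : ∀ i, 0 ≤ η i) (s : Fin m → SignType) :
    Convex ℝ (thickCone η s) := by
  rw [thickCone_eq_pi hη]
  exact convex_pi fun i _ => convex_signInterval _ _

theorem deltaS_mem_interior_thickCone (hη : ∀ i, 0 < η i) (s : Fin m → SignType) :
    deltaS η s ∈ interior (thickCone η s) := by
  rw [thickCone_eq_pi fun i => (hη i).le, interior_pi_set finite_univ]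
  exact fun i _ => mul_mem_interior_signInterval (hη i) (s i)

end ThickCone

theorem isPolyhedral_tauCone {N : ℕ} (I : Finset (Fin N)) : IsPolyhedral (tauCone I) :=
  .setOf_forall_mem fun _ => (isPolyhedral_Ici 0).inter ((isPolyhedral_singleton 0).setOf_imp _)

section Blocks

variable {N m : ℕ} (blk : Fin N → Fin m) (b : Fin N → ℤ)

def IsBlockMap (π : (Fin N → ℝ) →ₗ[ℝ] (Fin m → ℝ)) : Prop :=
  ∀ x i, π x i = ∑ j ∈ Finset.univ.filter (fun j => blk j = i), (b j : ℝ) * x j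

/-- `I ∩ B_i^+ ≠ ∅`. -/
def MeetsPos (I : Finset (Fin N)) (i : Fin m) : Prop := ∃ j ∈ I, blk j = i ∧ 0 < b j

/-- `I ∩ B_i^- ≠ ∅`. -/
def MeetsNeg (I : Finset (Fin N)) (i : Fin m) : Prop := ∃ j ∈ I, blk j = i ∧ b j < 0

variable {blk b} {π : (Fin N → ℝ) →ₗ[ℝ] (Fin m → ℝ)} {K : Set (Fin m → ℝ)} {I : Finset (Fin N)}

theorem IsBlockMap.map_single (hπ : IsBlockMap blk b π) (j : Fin N) (r : ℝ) :
    π (Pi.single j r) = Pi.single (blk j) (b j * r) := by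
  ext i
  rw [hπ]
  rcases eq_or_ne (blk j) i with rfl | hji
  · rw [Finset.sum_eq_single j (fun j' _ hj' => by simp [hj']) (by simp)]
    simp
  · rw [Finset.sum_eq_zero fun j' hj' => ?_]
    · simp [hji.symm]
    · have : j' ≠ j := by rintro rfl; exact hji (Finset.mem_filter.1 hj').2
      simp [this]

theorem add_mem_tauCone {t t' : Fin N → ℝ} (ht : t ∈ tauCone I) (ht' : t' ∈ tauCone I) :
    t + t' ∈ tauCone I := fun j =>
  ⟨add_nonneg (ht j).1 (ht' j).1, fun hj => by simp [(ht j).2 hj, (ht' j).2 hj]⟩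

theorem add_map_mem_KofI {y : Fin m → ℝ} (hy : y ∈ KofI π K I) {t : Fin N → ℝ}
    (ht : t ∈ tauCone I) : y + π t ∈ KofI π K I := by
  obtain ⟨kk, hkk, t', ht', rfl⟩ := hy
  exact ⟨kk, hkk, t' + t, add_mem_tauCone ht' ht, by rw [map_add]; abel⟩

theorem add_single_mem_KofI (hπ : IsBlockMap blk b π) {y : Fin m → ℝ} (hy : y ∈ KofI π K I)
    (i : Fin m) (r : ℝ) (hpos : 0 < r → MeetsPos blk b I i) (hneg : r < 0 → MeetsNeg blk b I i) :
    y + Pi.single i r ∈ KofI π K I := by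
  have hmove : ∀ j ∈ I, blk j = i → (b j : ℝ) ≠ 0 → 0 ≤ r / b j →
      y + Pi.single i r ∈ KofI π K I := by
    rintro j hjI rfl hbj hrb
    have ht : Pi.single j (r / b j) ∈ tauCone I := fun j' => by
      rcases eq_or_ne j' j with rfl | hj'
      · exact ⟨by simpa using hrb, fun h => (h hjI).elim⟩
      · simp [hj']
    simpa [hπ.map_single, mul_div_cancel₀ _ hbj] using add_map_mem_KofI hy ht
  rcases lt_trichotomy r 0 with hr | rfl | hr
  · obtain ⟨j, hjI, hji, hbj⟩ := hneg hr
    have hbj' : (b j : ℝ) < 0 := by exact_mod_cast hbj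
    exact hmove j hjI hji hbj'.ne (div_nonneg_of_nonpos hr.le hbj'.le)
  · simpa using hy
  · obtain ⟨j, hjI, hji, hbj⟩ := hpos hr
    have hbj' : (0 : ℝ) < b j := by exact_mod_cast hbj
    exact hmove j hjI hji hbj'.ne' (div_nonneg hr.le hbj'.le)

theorem add_mem_KofI_of_sign (hπ : IsBlockMap blk b π) {y : Fin m → ℝ} (hy : y ∈ KofI π K I)
    {w : Fin m → ℝ} (hw : ∀ i, (0 < w i → MeetsPos blk b I i) ∧ (w i < 0 → MeetsNeg blk b I i)) :
    y + w ∈ KofI π K I := by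
  rw [← Finset.univ_sum_single w]
  refine Finset.sum_induction _ (fun w => ∀ y ∈ KofI π K I, y + w ∈ KofI π K I)
    (fun w w' hw hw' y hy => by rw [← add_assoc]; exact hw' _ (hw y hy))
    (fun y hy => by simpa using hy)
    (fun i _ y hy => add_single_mem_KofI hπ hy i (w i) (hw i).1 (hw i).2) y hy

end Blocks

section Witness

variable {N m : ℕ} (blk : Fin N → Fin m) (b : Fin N → ℤ) (π : (Fin N → ℝ) →ₗ[ℝ] (Fin m → ℝ))
  (K : Set (Fin m → ℝ)) (I : Finset (Fin N)) (v : Fin m → ℤ)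

def signConstraint : Set (Fin m → ℝ) :=
  {z | ∀ i, (MeetsPos blk b I i → 0 ≤ z i) ∧ (MeetsNeg blk b I i → z i ≤ 0)}

def witnessCore : Set (Fin m → ℝ) :=
  {z | (fun i => (v i : ℝ)) + z ∈ KofI π K I} ∩ signConstraint blk b I

theorem isPolyhedral_signConstraint : IsPolyhedral (signConstraint blk b I) :=
  .setOf_forall_mem fun _ =>
    ((isPolyhedral_Ici 0).setOf_imp _).inter ((isPolyhedral_Iic 0).setOf_imp _)

variable {K}

theorem exists_isPolyhedral_image_eq_witnessCore (hK : IsPolyhedral K) :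
    ∃ P : Set ((Fin m → ℝ) × (Fin N → ℝ)), IsPolyhedral P ∧
      witnessCore blk b π K I v =
        (LinearMap.fst ℝ (Fin m → ℝ) (Fin N → ℝ) + π ∘ₗ LinearMap.snd ℝ (Fin m → ℝ) _) '' P := by
  set f := LinearMap.fst ℝ (Fin m → ℝ) (Fin N → ℝ) + π ∘ₗ LinearMap.snd ℝ (Fin m → ℝ) _
  set a : Fin m → ℝ := (fun i => (v i : ℝ)) - π fun j => if j ∈ I then 1 else 0
  refine ⟨{p | LinearMap.fst ℝ _ _ p + a ∈ K} ∩
      (LinearMap.snd ℝ _ _ ⁻¹' tauCone I ∩ f ⁻¹' signConstraint blk b I),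
    (hK.preimage_affine _ a).inter (((isPolyhedral_tauCone I).preimage _).inter
      ((isPolyhedral_signConstraint blk b I).preimage f)), ?_⟩
  ext z
  constructor
  · rintro ⟨⟨kk, hkk, t, ht, hz⟩, hzC⟩
    have hf : f (z - π t, t) = z := by simp [f]
    have hk : z - π t + a = kk := by simp only [a]; linear_combination hz
    refine ⟨(z - π t, t), ⟨show z - π t + a ∈ K by rwa [hk], ht, by rwa [mem_preimage, hf]⟩, hf⟩
  · rintro ⟨⟨k, t⟩, ⟨hk, ht, hC⟩, rfl⟩
    refine ⟨⟨_, hk, t, ht, ?_⟩, hC⟩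
    simp only [LinearMap.fst_apply, f, a, LinearMap.add_apply, LinearMap.coe_comp,
      Function.comp_apply, LinearMap.snd_apply]
    abel

theorem convex_witnessCore (hK : IsPolyhedral K) : Convex ℝ (witnessCore blk b π K I v) := by
  obtain ⟨P, hP, hcore⟩ := exists_isPolyhedral_image_eq_witnessCore blk b π I v hK
  rw [hcore]
  exact hP.convex.linear_image _

theorem isClosed_witnessCore_sub_thickCone (hK : IsPolyhedral K) {η : Fin m → ℝ}
    (hη : ∀ i, 0 ≤ η i) (s : Fin m → SignType) :
    IsClosed (witnessCore blk b π K I v - thickCone η s) := by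
  obtain ⟨P, hP, hcore⟩ := exists_isPolyhedral_image_eq_witnessCore blk b π I v hK
  rw [hcore, ← image_id (thickCone η s)]
  exact hP.isClosed_image_sub_image (isPolyhedral_thickCone hη s) _ LinearMap.id

end Witness

theorem exists_mem_uIcc_sign_clamp (p q : Prop) (y : ℝ) :
    ∃ y' ∈ uIcc 0 y, (p → 0 ≤ y') ∧ (q → y' ≤ 0) ∧ (y < y' → p) ∧ (y' < y → q) := by
  by_cases hp : p <;> by_cases hq : q
  · exact ⟨0, left_mem_uIcc, by simp [hp, hq]⟩
  · refine ⟨max y 0, ?_, by simp [hp, hq]⟩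
    rcases le_total y 0 with h | h <;> simp [h]
  · refine ⟨min y 0, ?_, by simp [hp, hq]⟩
    rcases le_total y 0 with h | h <;> simp [h]
  · exact ⟨y, right_mem_uIcc, by simp [hp, hq]⟩

theorem mem_signInterval_of_mem_uIcc {a : ℝ} (ha : 0 ≤ a) {σ : SignType} {y y' : ℝ}
    (hy : y ∈ signInterval a σ) (hy' : y' ∈ uIcc 0 y) (hup : y < y' → σ ≠ -1)
    (hdown : y' < y → σ ≠ 1) : y' ∈ signInterval a σ := by
  cases σ
  · have h0 : (0 : ℝ) ∈ signInterval a 0 := ⟨by linarith, by linarith⟩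
    exact (convex_signInterval a 0).ordConnected.uIcc_subset h0 hy hy'
  · have : y' ≤ y := not_lt.1 fun h => hup h rfl
    exact this.trans hy
  · have : y ≤ y' := not_lt.1 fun h => hdown h rfl
    exact le_trans hy this

theorem mem_signPattern_iff {N m : ℕ} {blk : Fin N → Fin m} {b : Fin N → ℤ}
    {π : (Fin N → ℝ) →ₗ[ℝ] (Fin m → ℝ)} (hπ : IsBlockMap blk b π) {η : Fin m → ℝ}
    (hη : ∀ i, 0 < η i) (K : Set (Fin m → ℝ)) (I : Finset (Fin N))
    (v : Fin m → ℤ) (s : Fin m → SignType) :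
    s ∈ signPattern blk b π η K I v ↔ (witnessCore blk b π K I v ∩ thickCone η s).Nonempty := by
  have hpi := thickCone_eq_pi (η := η) (fun i => (hη i).le) s
  constructor
  · -- clamp each coordinate towards `0` into the sign constraint; this moves only in
    -- directions along which `K(I)` is invariant
    rintro ⟨⟨_, hx, z, hz, rfl⟩, hsign⟩
    rw [hpi] at hz
    choose z' hz' hpos hneg hup hdown using fun i =>
      exists_mem_uIcc_sign_clamp (MeetsPos blk b I i) (MeetsNeg blk b I i) (z i)
    refine ⟨z', ⟨?_, fun i => ⟨hpos i, hneg i⟩⟩, ?_⟩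
    · have := add_mem_KofI_of_sign hπ hx (w := z' - z) fun i =>
        ⟨fun h => hup i (sub_pos.1 h), fun h => hdown i (sub_neg.1 h)⟩
      simpa [add_assoc] using this
    · rw [hpi]
      exact fun i _ => mem_signInterval_of_mem_uIcc (hη i).le (hz i trivial) (hz' i)
        (fun h => (hsign i).1 (hup i h)) (fun h => (hsign i).2 (hdown i h))
  · rintro ⟨z, ⟨hzK, hzC⟩, hzB⟩
    refine ⟨⟨_, hzK, z, hzB, rfl⟩, fun i => ⟨fun hP hs => ?_, fun hM hs => ?_⟩⟩
    all_goals
      have hzi : z i ∈ signInterval (η i) (s i) := (hpi ▸ hzB) i trivial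
      rw [hs] at hzi
      have := hη i
    · linarith [(hzC i).1 hP, show z i ≤ -η i / 2 from hzi]
    · linarith [(hzC i).2 hM, show η i / 2 ≤ z i from hzi]

theorem exists_sign_pattern_witness_general
    {N m : ℕ}
    (blk : Fin N → Fin m) (b : Fin N → ℤ)
    (π : (Fin N → ℝ) →ₗ[ℝ] (Fin m → ℝ))
    (hπ : ∀ (x : Fin N → ℝ) (i : Fin m),
      π x i = ∑ j ∈ Finset.univ.filter (fun j => blk j = i), (b j : ℝ) * x j)
    (η : Fin m → ℝ)
    (hηpos : ∀ i, 0 < η i)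
    (K : Set (Fin m → ℝ))
    -- `K` is a closed convex polyhedron
    (hKpoly : ∃ (n : ℕ) (f : Fin n → ((Fin m → ℝ) →ₗ[ℝ] ℝ)) (c : Fin n → ℝ),
      K = {x | ∀ j, f j x ≤ c j})
    (I : Finset (Fin N)) (v : Fin m → ℤ) :
    ∃ K' : Set (Fin m → ℝ), IsClosed K' ∧ Convex ℝ K' ∧
      ∀ s : Fin m → SignType,
        (s ∈ signPattern blk b π η K I v ↔ (K' ∩ thickCone η s).Nonempty) ∧
        ((K' ∩ thickCone η s).Nonempty →
          (K' ∩ interior (thickCone η s)).Nonempty) := by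
  obtain ⟨n, f, c, rfl⟩ := hKpoly
  have hK : IsPolyhedral {x | ∀ j, f j x ≤ c j} := by
    simpa only [Set.ofPred_forall] using IsPolyhedral.iInter fun j => .setOf_le (f j) (c j)
  set Q := witnessCore blk b π {x | ∀ j, f j x ≤ c j} I v
  have hη : ∀ i, 0 ≤ η i := fun i => (hηpos i).le
  obtain ⟨ε, hQε, hε⟩ := ((Filter.eventually_all.2 fun s => eventually_disjoint_cthickening
    (isClosed_witnessCore_sub_thickCone blk b π I v hK hη s)).and self_mem_nhdsWithin).exists
  have hmeet : ∀ s, (Q ∩ thickCone η s).Nonempty ↔ (cthickening ε Q ∩ thickCone η s).Nonempty :=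
    fun s => ⟨fun h => h.mono (inter_subset_inter_left _ (self_subset_cthickening Q)), fun h => by
      rw [← not_disjoint_iff_nonempty_inter] at h ⊢
      exact mt (hQε s) h⟩
  refine ⟨cthickening ε Q, isClosed_cthickening,
    (convex_witnessCore blk b π I v hK).cthickening ε, fun s => ⟨?_, fun h => ?_⟩⟩
  · rw [mem_signPattern_iff hπ hηpos, hmeet]
  · exact (convex_thickCone hη s).cthickening_inter_interior_nonempty
      ⟨_, deltaS_mem_interior_thickCone hηpos s⟩ ((hmeet s).2 h) hε

/-- **Proposition (existence of the sign-pattern witness `K_{I,v}`).**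
There is a closed convex set `K_{I,v}` whose intersection pattern with the thick
cones `𝔹_s` realizes the sign pattern `𝕊_{K,I,v}`, and which meets the interior
of `𝔹_s` whenever it meets `𝔹_s`. -/
theorem exists_sign_pattern_witness
    {N m : ℕ}
    (blk : Fin N → Fin m) (b : Fin N → ℤ)
    (hb0 : ∀ j, b j ≠ 0)
    (hbal : ∀ i : Fin m, ∑ j ∈ Finset.univ.filter (fun j => blk j = i), b j = 0)
    (π : (Fin N → ℝ) →ₗ[ℝ] (Fin m → ℝ))
    (hπ : ∀ (x : Fin N → ℝ) (i : Fin m),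
      π x i = ∑ j ∈ Finset.univ.filter (fun j => blk j = i), (b j : ℝ) * x j)
    (η : Fin m → ℝ)
    (hη : ∀ i, η i = ∑ j ∈ Finset.univ.filter (fun j => blk j = i ∧ 0 < b j), (b j : ℝ))
    (hηpos : ∀ i, 0 < η i)
    (K : Set (Fin m → ℝ)) (hKne : K.Nonempty)
    -- `K` is a closed convex polyhedron
    (hKpoly : ∃ (n : ℕ) (f : Fin n → ((Fin m → ℝ) →ₗ[ℝ] ℝ)) (c : Fin n → ℝ),
      K = {x | ∀ j, f j x ≤ c j})
    (I : Finset (Fin N)) (v : Fin m → ℤ) :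
    ∃ K' : Set (Fin m → ℝ), IsClosed K' ∧ Convex ℝ K' ∧
      ∀ s : Fin m → SignType,
        (s ∈ signPattern blk b π η K I v ↔ (K' ∩ thickCone η s).Nonempty) ∧
        ((K' ∩ thickCone η s).Nonempty →
          (K' ∩ interior (thickCone η s)).Nonempty) :=
  exists_sign_pattern_witness_general blk b π hπ η hηpos K hKpoly I v
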